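/- Let b, x > 0 and a, a' ∈ ℂ with a ≠ a'. Then (a'-a)·∫₀ˣ t^{b-1}e^{-t}M(a,b,t)M(a',b,t)dt = x^b e^{-x}·(M(a,b,x)·∂ₓM(a',b,x) - M(a',b,x)·∂ₓM(a,b,x)). -/

import Mathlib

/-- The Kummer confluent hypergeometric function `M(a,b,x)`, complex first
parameter, real `b` and `x`. -/
noncomputable def kummerM (a : ℂ) (b x : ℝ) : ℂ :=
  ∑' n : ℕ, (ascPochhammer ℂ n).eval a /
    ((ascPochhammer ℂ n).eval (b : ℂ) * (n.factorial : ℂ)) * (x : ℂ) ^ n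

/-!
Since `(t^b e^{-t})' = t^{b-1} e^{-t} (b - t)`, Kummer's equation `t M'' + (b - t) M' = a M`
has the Sturm–Liouville form `(t^b e^{-t} M')' = a t^{b-1} e^{-t} M`. Lagrange's identity then
shows that the weighted Wronskian `t^b e^{-t} (M(a) M(a')' - M(a') M(a)')` has derivative
`(a' - a) t^{b-1} e^{-t} M(a) M(a')`; it vanishes at `t = 0` because `b > 0`, and the fundamental
theorem of calculus gives the identity. Kummer's equation itself is read off from the power
series, using `M(a,b,·)' = (a/b) M(a+1,b+1,·)`.
-/

open Set MeasureTheory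

theorem hasDerivAt_tsum_ofReal_pow {c : ℕ → ℂ}
    (hc : ∀ r : ℝ, 0 ≤ r →
      Summable fun n : ℕ => ‖((n : ℂ) + 1) * c (n + 1)‖ * r ^ n)
    (t : ℝ) :
    HasDerivAt (fun s : ℝ => ∑' n, c n * (s : ℂ) ^ n)
      (∑' n : ℕ, ((n : ℂ) + 1) * c (n + 1) * (t : ℂ) ^ n) t := by
  set R := |t| + 1
  have hbound : Summable fun n => ‖c n‖ * n * R ^ (n - 1) := by
    refine (summable_nat_add_iff 1).mp ((hc R (by positivity)).congr fun n => ?_)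
    rw [norm_mul, Nat.add_sub_cancel, ← Nat.cast_succ, Complex.norm_natCast]
    ring
  have hderiv := hasDerivAt_tsum_of_isPreconnected (g := fun n (s : ℝ) => c n * (s : ℂ) ^ n)
    (g' := fun n (s : ℝ) => c n * (n * (s : ℂ) ^ (n - 1))) (y₀ := 0) (y := t) hbound
    Metric.isOpen_ball (convex_ball 0 R).isPreconnected
    (fun n s _ => ((hasDerivAt_pow n (s : ℂ)).comp_ofReal).const_mul (c n))
    (fun n s hs => by
      rw [mem_ball_zero_iff] at hs
      rw [norm_mul, norm_mul, norm_pow, Complex.norm_natCast, Complex.norm_real, mul_assoc]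
      gcongr)
    (Metric.mem_ball_self (by positivity))
    ((summable_nat_add_iff 1).mp (by simp [summable_zero]))
    (mem_ball_zero_iff.2 (by simp [R, Real.norm_eq_abs]))
  have hsum : Summable fun n : ℕ => ((n : ℂ) + 1) * c (n + 1) * (t : ℂ) ^ n :=
    .of_norm ((hc |t| (abs_nonneg t)).congr fun n => by
      rw [norm_mul _ ((t : ℂ) ^ n), norm_pow, Complex.norm_real, Real.norm_eq_abs])
  rw [tsum_eq_zero_add' (hsum.congr fun n => by push_cast [Nat.add_sub_cancel]; ring)] at hderiv
  simpa [Nat.add_sub_cancel, mul_comm, mul_left_comm, mul_assoc] using hderiv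

noncomputable def kummerCoeff (a : ℂ) (b : ℝ) (n : ℕ) : ℂ :=
  (ascPochhammer ℂ n).eval a / ((ascPochhammer ℂ n).eval (b : ℂ) * (n.factorial : ℂ))

theorem ascPochhammer_eval_ofReal_ne_zero {b : ℝ} (hb : 0 < b) (n : ℕ) :
    (ascPochhammer ℂ n).eval (b : ℂ) ≠ 0 := by
  rw [ascPochhammer_eval₂ Complex.ofRealHom, ← Complex.ofRealHom_eq_coe,
    Polynomial.eval₂_at_apply, Complex.ofRealHom_eq_coe, Complex.ofReal_ne_zero]
  exact (ascPochhammer_pos n b hb).ne'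

theorem kummerCoeff_succ_mul {b : ℝ} (hb : 0 < b) (a : ℂ) (n : ℕ) :
    kummerCoeff a b (n + 1) * ((b + n) * (n + 1)) = kummerCoeff a b n * (a + n) := by
  have hbn : (b : ℂ) + n ≠ 0 := by exact_mod_cast (by positivity : 0 < b + n).ne'
  have := ascPochhammer_eval_ofReal_ne_zero hb n
  simp only [kummerCoeff, ascPochhammer_succ_eval, Nat.factorial_succ, Nat.cast_mul]
  push_cast
  field_simp

theorem succ_mul_kummerCoeff_succ {b : ℝ} (hb : 0 < b) (a : ℂ) (n : ℕ) :
    (n + 1) * kummerCoeff a b (n + 1) = a / b * kummerCoeff (a + 1) (b + 1) n := by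
  have := ascPochhammer_eval_ofReal_ne_zero (by positivity : 0 < b + 1) n
  have hb0 : (b : ℂ) ≠ 0 := by exact_mod_cast hb.ne'
  push_cast at this ⊢
  simp only [kummerCoeff, ascPochhammer_succ_left, Polynomial.eval_mul, Polynomial.eval_X,
    Polynomial.eval_comp, Polynomial.eval_add, Polynomial.eval_one, Nat.factorial_succ,
    Nat.cast_mul]
  push_cast
  field_simp

theorem norm_kummerCoeff_le {b : ℝ} (hb : 0 < b) (a : ℂ) (n : ℕ) :
    ‖kummerCoeff a b n‖ ≤ max 1 (‖a‖ / b) ^ n / n.factorial := by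
  induction n with
  | zero => simp [kummerCoeff]
  | succ n ih =>
    have hrec := congrArg norm (kummerCoeff_succ_mul hb a n)
    have hbn : ‖(b : ℂ) + n‖ = b + n := by
      exact_mod_cast Complex.norm_of_nonneg (by positivity : 0 ≤ b + n)
    have hn : ‖(n : ℂ) + 1‖ = n + 1 := by exact_mod_cast Complex.norm_natCast (n + 1)
    have ha : ‖a + n‖ ≤ max 1 (‖a‖ / b) * (b + n) := calc
      ‖a + n‖ ≤ ‖a‖ + n := by simpa using norm_add_le a n
      _ = ‖a‖ / b * b + 1 * n := by field_simp
      _ ≤ max 1 (‖a‖ / b) * b + max 1 (‖a‖ / b) * n := by gcongr <;> simp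
      _ = max 1 (‖a‖ / b) * (b + n) := by ring
    rw [norm_mul, norm_mul, norm_mul, hbn, hn] at hrec
    rw [le_div_iff₀ (by positivity)] at ih
    rw [Nat.factorial_succ, Nat.cast_mul, pow_succ, le_div_iff₀ (by positivity)]
    refine le_of_mul_le_mul_right ?_ (by positivity : 0 < b + n)
    calc ‖kummerCoeff a b (n + 1)‖ * ((n + 1 : ℕ) * n.factorial) * (b + n)
        = ‖kummerCoeff a b n‖ * n.factorial * ‖a + n‖ := by
          push_cast
          linear_combination n.factorial * hrec
      _ ≤ max 1 (‖a‖ / b) ^ n * (max 1 (‖a‖ / b) * (b + n)) := by gcongr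
      _ = _ := by ring

theorem summable_norm_kummerCoeff_mul_pow {b : ℝ} (hb : 0 < b) (a : ℂ) {r : ℝ}
    (hr : 0 ≤ r) :
    Summable fun n => ‖kummerCoeff a b n‖ * r ^ n := by
  refine .of_nonneg_of_le (fun n => by positivity) (fun n => ?_)
    (Real.summable_pow_div_factorial (max 1 (‖a‖ / b) * r))
  rw [mul_pow, mul_div_right_comm]
  gcongr
  exact norm_kummerCoeff_le hb a n

theorem kummerM_eq_tsum (a : ℂ) (b : ℝ) :
    kummerM a b = fun x : ℝ => ∑' n, kummerCoeff a b n * (x : ℂ) ^ n := rfl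

theorem hasSum_kummerM {b : ℝ} (hb : 0 < b) (a : ℂ) (x : ℝ) :
    HasSum (fun n => kummerCoeff a b n * (x : ℂ) ^ n) (kummerM a b x) :=
  (Summable.of_norm ((summable_norm_kummerCoeff_mul_pow hb a (abs_nonneg x)).congr fun n => by
    rw [norm_mul, norm_pow, Complex.norm_real, Real.norm_eq_abs])).hasSum

theorem hasSum_succ_mul_kummerCoeff_succ {b : ℝ} (hb : 0 < b) (a : ℂ) (x : ℝ) :
    HasSum (fun n : ℕ => ((n : ℂ) + 1) * kummerCoeff a b (n + 1) * (x : ℂ) ^ n)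
      (a / b * kummerM (a + 1) (b + 1) x) := by
  simpa only [succ_mul_kummerCoeff_succ hb, mul_assoc] using
    (hasSum_kummerM (by positivity) (a + 1) x).mul_left (a / b)

theorem hasDerivAt_kummerM {b : ℝ} (hb : 0 < b) (a : ℂ) (x : ℝ) :
    HasDerivAt (kummerM a b) (a / b * kummerM (a + 1) (b + 1) x) x := by
  rw [← (hasSum_succ_mul_kummerCoeff_succ hb a x).tsum_eq, kummerM_eq_tsum]
  refine hasDerivAt_tsum_ofReal_pow (fun r hr => ?_) x
  simpa only [succ_mul_kummerCoeff_succ hb, norm_mul, mul_assoc] using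
    (summable_norm_kummerCoeff_mul_pow (by positivity) (a + 1) hr).mul_left ‖a / b‖

theorem continuous_kummerM {b : ℝ} (hb : 0 < b) (a : ℂ) : Continuous (kummerM a b) :=
  continuous_iff_continuousAt.2 fun x => (hasDerivAt_kummerM hb a x).continuousAt

theorem hasSum_mul_pow_of_hasSum_succ {R : Type*} [CommRing R] [TopologicalSpace R]
    [IsTopologicalRing R]
    {g : ℕ → R} {x s : R} (h : HasSum (fun n => g (n + 1) * x ^ n) s) (h0 : g 0 = 0) :
    HasSum (fun n => g n * x ^ n) (x * s) := by
  refine (hasSum_nat_add_iff' 1).mp ?_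
  simpa [h0, pow_succ, mul_comm, mul_left_comm, mul_assoc] using h.mul_left x

/-- The Kummer equation `x M'' + (b - x) M' = a M`, with `M'` and `M''` as given by
`hasDerivAt_kummerM`. -/
theorem kummerM_ode {b : ℝ} (hb : 0 < b) (a : ℂ) (x : ℝ) :
    x * (a / b * ((a + 1) / ↑(b + 1) * kummerM (a + 1 + 1) (b + 1 + 1) x)) +
      (b - x) * (a / b * kummerM (a + 1) (b + 1) x) = a * kummerM a b x := by
  have h0 := hasSum_kummerM hb a x
  have h1 := hasSum_succ_mul_kummerCoeff_succ hb a x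
  have h2 : HasSum
      (fun n : ℕ => ((n : ℂ) + 1) * ((n + 1 : ℕ) + 1) * kummerCoeff a b (n + 2) * x ^ n)
      (a / b * ((a + 1) / ↑(b + 1) * kummerM (a + 1 + 1) (b + 1 + 1) x)) := by
    refine ((hasSum_succ_mul_kummerCoeff_succ (by positivity) (a + 1) x).mul_left
      (a / b)).congr_fun fun n => ?_
    rw [mul_assoc ((n : ℂ) + 1), succ_mul_kummerCoeff_succ hb a (n + 1)]
    ring
  have hx1 : HasSum (fun n : ℕ => (n : ℂ) * kummerCoeff a b n * x ^ n)
      (x * (a / b * kummerM (a + 1) (b + 1) x)) :=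
    hasSum_mul_pow_of_hasSum_succ (g := fun n => (n : ℂ) * kummerCoeff a b n)
      (by simpa using h1) (by simp)
  have hx2 : HasSum (fun n : ℕ => (n : ℂ) * ((n + 1) * kummerCoeff a b (n + 1)) * x ^ n)
      (x * (a / b * ((a + 1) / ↑(b + 1) * kummerM (a + 1 + 1) (b + 1 + 1) x))) :=
    hasSum_mul_pow_of_hasSum_succ (g := fun n => (n : ℂ) * ((n + 1) * kummerCoeff a b (n + 1)))
      (by simpa [mul_assoc] using h2) (by simp)
  have hzero := (hx2.add (h1.mul_left (b : ℂ))).sub (hx1.add (h0.mul_left a))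
  have hterms : ∀ n : ℕ, (n : ℂ) * ((n + 1) * kummerCoeff a b (n + 1)) * x ^ n +
      b * ((n + 1) * kummerCoeff a b (n + 1) * x ^ n) -
      ((n : ℂ) * kummerCoeff a b n * x ^ n + a * (kummerCoeff a b n * x ^ n)) = 0 := fun n => by
    linear_combination (x : ℂ) ^ n * kummerCoeff_succ_mul hb a n
  simp only [hterms] at hzero
  linear_combination -hasSum_zero.unique hzero

theorem hasDerivAt_cpow_mul_exp_neg_mul_deriv_kummerM {b : ℝ} (hb : 0 < b) (a : ℂ) {t : ℝ}
    (ht : t ≠ 0) :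
    HasDerivAt
      (fun s : ℝ => (s : ℂ) ^ (b : ℂ) * Real.exp (-s) * (a / b * kummerM (a + 1) (b + 1) s))
      (a * ((t : ℂ) ^ ((b : ℂ) - 1) * Real.exp (-t) * kummerM a b t)) t := by
  have hpow := hasDerivAt_ofReal_cpow_const ht (r := b) (by exact_mod_cast hb.ne')
  have hexp : HasDerivAt (fun s : ℝ => (Real.exp (-s) : ℂ)) (-Real.exp (-t) : ℝ) t := by
    simpa using ((Real.hasDerivAt_exp (-t)).comp t (hasDerivAt_neg t)).ofReal_comp
  have hM := (hasDerivAt_kummerM (by positivity : 0 < b + 1) (a + 1) t).const_mul (a / b)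
  refine ((hpow.fun_mul hexp).fun_mul hM).congr_deriv ?_
  have hsplit : (t : ℂ) ^ (b : ℂ) = (t : ℂ) ^ ((b : ℂ) - 1) * t := by
    calc (t : ℂ) ^ (b : ℂ) = (t : ℂ) ^ ((b : ℂ) - 1 + 1) := by rw [sub_add_cancel]
      _ = _ := by rw [Complex.cpow_add _ _ (Complex.ofReal_ne_zero.2 ht), Complex.cpow_one]
  rw [hsplit, Complex.ofReal_neg]
  linear_combination (t : ℂ) ^ ((b : ℂ) - 1) * Real.exp (-t) * kummerM_ode hb a t

theorem HasDerivAt.mul_wronskian {𝕜 𝔸 : Type*} [NontriviallyNormedField 𝕜]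
    [NormedCommRing 𝔸] [NormedAlgebra 𝕜 𝔸] {p u v u' v' : 𝕜 → 𝔸} {Lu Lv : 𝔸} {t : 𝕜}
    (hu : HasDerivAt u (u' t) t) (hv : HasDerivAt v (v' t) t)
    (hpu : HasDerivAt (fun s => p s * u' s) Lu t)
    (hpv : HasDerivAt (fun s => p s * v' s) Lv t) :
    HasDerivAt (fun s => p s * (u s * v' s - v s * u' s)) (u t * Lv - v t * Lu) t := by
  have hfun : (fun s => p s * (u s * v' s - v s * u' s)) =
      fun s => u s * (p s * v' s) - v s * (p s * u' s) := by
    funext s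
    ring
  rw [hfun]
  exact ((hu.fun_mul hpv).fun_sub (hv.fun_mul hpu)).congr_deriv (by ring)

theorem kummerM_integral_identity_general (b x : ℝ) (hb : 0 < b) (a a' : ℂ) :
    (a' - a) * ∫ t in (0 : ℝ)..x,
        (t : ℂ) ^ ((b : ℂ) - 1) * Real.exp (-t) * kummerM a b t * kummerM a' b t =
      (x : ℂ) ^ (b : ℂ) * Real.exp (-x) *
        (kummerM a b x * deriv (fun x' : ℝ => kummerM a' b x') x -
         kummerM a' b x * deriv (fun x' : ℝ => kummerM a b x') x) := by
  set W : ℝ → ℂ := fun s => (s : ℂ) ^ (b : ℂ) * Real.exp (-s) *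
    (kummerM a b s * (a' / b * kummerM (a' + 1) (b + 1) s) -
      kummerM a' b s * (a / b * kummerM (a + 1) (b + 1) s))
  have hW' : ∀ t ∈ Ioo (min 0 x) (max 0 x), HasDerivWithinAt W
      ((a' - a) * ((t : ℂ) ^ ((b : ℂ) - 1) * Real.exp (-t) * kummerM a b t * kummerM a' b t))
      (Ioi t) t := by
    intro t ht
    have ht0 : t ≠ 0 := by
      rintro rfl
      cases le_total 0 x <;> simp_all
    refine (((hasDerivAt_kummerM hb a t).mul_wronskian (hasDerivAt_kummerM hb a' t)
      (hasDerivAt_cpow_mul_exp_neg_mul_deriv_kummerM hb a ht0)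
      (hasDerivAt_cpow_mul_exp_neg_mul_deriv_kummerM hb a' ht0)).congr_deriv ?_).hasDerivWithinAt
    ring
  have hWc : Continuous W := by
    have := Complex.continuous_ofReal_cpow_const (y := b) (by simpa using hb)
    have := continuous_kummerM hb a
    have := continuous_kummerM hb a'
    have := continuous_kummerM (by positivity : 0 < b + 1) (a + 1)
    have := continuous_kummerM (by positivity : 0 < b + 1) (a' + 1)
    fun_prop
  have hint : IntervalIntegrable (fun t : ℝ =>
      (t : ℂ) ^ ((b : ℂ) - 1) * Real.exp (-t) * kummerM a b t * kummerM a' b t) volume 0 x := by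
    simp only [mul_assoc]
    refine (intervalIntegral.intervalIntegrable_cpow' (by simpa using hb)).mul_continuousOn
      (Continuous.continuousOn ?_)
    have := continuous_kummerM hb a
    have := continuous_kummerM hb a'
    fun_prop
  have hW0 : W 0 = 0 := by simp [W, Complex.zero_cpow (by exact_mod_cast hb.ne' : (b : ℂ) ≠ 0)]
  rw [← intervalIntegral.integral_const_mul, intervalIntegral.integral_eq_sub_of_hasDeriv_right
    hWc.continuousOn hW' (hint.const_mul _), hW0, sub_zero, (hasDerivAt_kummerM hb a x).deriv,
    (hasDerivAt_kummerM hb a' x).deriv]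

/-- For `b, x > 0` and `a ≠ a'` in `ℂ`:
`(a'-a) ∫₀ˣ t^{b-1} e^{-t} M(a,b,t) M(a',b,t) dt
  = x^b e^{-x} (M(a,b,x) ∂ₓM(a',b,x) - M(a',b,x) ∂ₓM(a,b,x))`. -/
theorem kummerM_integral_identity (b x : ℝ) (hb : 0 < b) (hx : 0 < x)
    (a a' : ℂ) (haa' : a ≠ a') :
    (a' - a) * ∫ t in (0 : ℝ)..x,
        (t : ℂ) ^ ((b : ℂ) - 1) * Real.exp (-t) * kummerM a b t * kummerM a' b t =
      (x : ℂ) ^ (b : ℂ) * Real.exp (-x) *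
        (kummerM a b x * deriv (fun x' : ℝ => kummerM a' b x') x -
         kummerM a' b x * deriv (fun x' : ℝ => kummerM a b x') x) :=
  kummerM_integral_identity_general b x hb a a'
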